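/- The map Δ : GL(φ)₁ → GL(φ)₀ given by Δ(A) := (I + A∘φ, I + φ∘A), together with the action A^{(F,f)} = F⁻¹∘A∘f, is a crossed module of groups: Δ is a group homomorphism from (GL(φ)₁, ⊙), Δ(A^{(F,f)}) = (F,f)⁻¹·Δ(A)·(F,f), and A₁^{Δ(A₂)} = A₂⁻¹ ⊙ A₁ ⊙ A₂. -/

import Mathlib

open LinearMap

variable {K W V : Type} [Field K] [AddCommGroup W] [AddCommGroup V]
  [Module K W] [Module K V]

/-- Membership in the Whitehead group `GL(φ)₁`. -/
def glOne1Mem (φ : W →ₗ[K] V) (A : V →ₗ[K] W) : Prop :=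
  IsUnit ((1 : Module.End K W) + A ∘ₗ φ) ∧ IsUnit ((1 : Module.End K V) + φ ∘ₗ A)

/-- The group operation `A₁ ⊙ A₂ = A₁ + A₂ + A₁ ∘ φ ∘ A₂`. -/
def glMul (φ : W →ₗ[K] V) (A₁ A₂ : V →ₗ[K] W) : V →ₗ[K] W :=
  A₁ + A₂ + A₁ ∘ₗ φ ∘ₗ A₂

/-- The `⊙`-inverse `−A∘(I+φ∘A)⁻¹`. -/
noncomputable def glInv (φ : W →ₗ[K] V) (A : V →ₗ[K] W) : V →ₗ[K] W :=
  -(A ∘ₗ Ring.inverse ((1 : Module.End K V) + φ ∘ₗ A))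

/-- The right action `A^{(F,f)} = F⁻¹ ∘ A ∘ f`. -/
def glAct (A : V →ₗ[K] W) (F : (Module.End K W)ˣ) (f : (Module.End K V)ˣ) :
    V →ₗ[K] W :=
  ((F⁻¹ : (Module.End K W)ˣ) : Module.End K W) ∘ₗ A ∘ₗ ((f : (Module.End K V)ˣ) : Module.End K V)

/-! The Peiffer identity rests on the expansion
`(B ⊙ A₁) ⊙ A₂ = B ⊙ A₂ + (1 + Bφ) A₁ (1 + φA₂)`: for `B = A₂⁻¹` the first summand vanishes,
and `1 + Bφ = (1 + A₂φ)⁻¹` because `A ↦ 1 + Aφ` is multiplicative and `B ⊙ A₂ = 0`. -/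

section Intertwining

variable {R M N : Type*} [Semiring R] [AddCommMonoid M] [AddCommMonoid N]
  [Module R M] [Module R N]

theorem comp_one_add_comp (φ : M →ₗ[R] N) (A : N →ₗ[R] M) :
    φ ∘ₗ ((1 : Module.End R M) + A ∘ₗ φ) = ((1 : Module.End R N) + φ ∘ₗ A) ∘ₗ φ := by
  simp only [comp_add, add_comp, comp_assoc, Module.End.one_eq_id, comp_id, id_comp]

theorem comp_units_inv_eq_of_comp_eq {φ : M →ₗ[R] N} {F : (Module.End R M)ˣ}
    {f : (Module.End R N)ˣ} (hφ : φ ∘ₗ (F : Module.End R M) = (f : Module.End R N) ∘ₗ φ) :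
    φ ∘ₗ ((F⁻¹ : (Module.End R M)ˣ) : Module.End R M) =
      ((f⁻¹ : (Module.End R N)ˣ) : Module.End R N) ∘ₗ φ :=
  calc φ ∘ₗ ((F⁻¹ : (Module.End R M)ˣ) : Module.End R M)
      = ((f⁻¹ : (Module.End R N)ˣ) : Module.End R N) ∘ₗ (f : Module.End R N) ∘ₗ φ ∘ₗ ↑F⁻¹ := by
        rw [← comp_assoc, ← Module.End.mul_eq_comp, Units.inv_mul, Module.End.one_eq_id, id_comp]
    _ = ↑f⁻¹ ∘ₗ φ ∘ₗ (F * F⁻¹ : (Module.End R M)ˣ) := by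
        rw [← comp_assoc _ φ, ← hφ, Units.val_mul, Module.End.mul_eq_comp, comp_assoc]
    _ = ((f⁻¹ : (Module.End R N)ˣ) : Module.End R N) ∘ₗ φ := by
        rw [mul_inv_cancel, Units.val_one, Module.End.one_eq_id, comp_id]

end Intertwining

section WhiteheadGroup

variable (φ : W →ₗ[K] V)

theorem glMul_eq_add_comp (A₁ A₂ : V →ₗ[K] W) :
    glMul φ A₁ A₂ = A₁ ∘ₗ ((1 : Module.End K V) + φ ∘ₗ A₂) + A₂ := by
  simp only [glMul, comp_add, Module.End.one_eq_id, comp_id]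
  abel

theorem one_add_glMul_comp (A₁ A₂ : V →ₗ[K] W) :
    (1 : Module.End K W) + glMul φ A₁ A₂ ∘ₗ φ =
      ((1 : Module.End K W) + A₁ ∘ₗ φ) * ((1 : Module.End K W) + A₂ ∘ₗ φ) := by
  simp only [glMul, mul_add, add_mul, one_mul, mul_one, Module.End.mul_eq_comp, add_comp,
    comp_assoc]
  abel

theorem one_add_comp_glMul (A₁ A₂ : V →ₗ[K] W) :
    (1 : Module.End K V) + φ ∘ₗ glMul φ A₁ A₂ =
      ((1 : Module.End K V) + φ ∘ₗ A₁) * ((1 : Module.End K V) + φ ∘ₗ A₂) := by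
  simp only [glMul, mul_add, add_mul, one_mul, mul_one, Module.End.mul_eq_comp, comp_add,
    comp_assoc]
  abel

theorem one_add_glAct_comp {A : V →ₗ[K] W} {F : (Module.End K W)ˣ} {f : (Module.End K V)ˣ}
    (hφ : φ ∘ₗ (F : Module.End K W) = (f : Module.End K V) ∘ₗ φ) :
    (1 : Module.End K W) + glAct A F f ∘ₗ φ =
      ((F⁻¹ : (Module.End K W)ˣ) : Module.End K W) * ((1 : Module.End K W) + A ∘ₗ φ) *
        (F : Module.End K W) := by
  rw [mul_add, add_mul, mul_one, Units.inv_mul, glAct, Module.End.mul_eq_comp,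
    Module.End.mul_eq_comp]
  simp only [comp_assoc, hφ]

theorem one_add_comp_glAct {A : V →ₗ[K] W} {F : (Module.End K W)ˣ} {f : (Module.End K V)ˣ}
    (hφ : φ ∘ₗ (F : Module.End K W) = (f : Module.End K V) ∘ₗ φ) :
    (1 : Module.End K V) + φ ∘ₗ glAct A F f =
      ((f⁻¹ : (Module.End K V)ˣ) : Module.End K V) * ((1 : Module.End K V) + φ ∘ₗ A) *
        (f : Module.End K V) := by
  rw [mul_add, add_mul, mul_one, Units.inv_mul, glAct, Module.End.mul_eq_comp,
    Module.End.mul_eq_comp, ← comp_assoc, comp_units_inv_eq_of_comp_eq hφ]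
  simp only [comp_assoc]

theorem glMul_glMul (B A₁ A₂ : V →ₗ[K] W) :
    glMul φ (glMul φ B A₁) A₂ =
      glMul φ B A₂ +
        ((1 : Module.End K W) + B ∘ₗ φ) ∘ₗ A₁ ∘ₗ ((1 : Module.End K V) + φ ∘ₗ A₂) := by
  simp only [glMul, comp_add, add_comp, comp_assoc, Module.End.one_eq_id, comp_id, id_comp]
  abel

theorem glMul_glInv_self {A : V →ₗ[K] W} (h : IsUnit ((1 : Module.End K V) + φ ∘ₗ A)) :
    glMul φ (glInv φ A) A = 0 := by
  rw [glMul_eq_add_comp, glInv, neg_comp, comp_assoc, ← Module.End.mul_eq_comp,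
    Ring.inverse_mul_cancel _ h, Module.End.one_eq_id, comp_id, neg_add_cancel]

theorem units_inv_eq_one_add_glInv_comp {A : V →ₗ[K] W}
    (hW : IsUnit ((1 : Module.End K W) + A ∘ₗ φ)) (hV : IsUnit ((1 : Module.End K V) + φ ∘ₗ A)) :
    ((hW.unit⁻¹ : (Module.End K W)ˣ) : Module.End K W) = 1 + glInv φ A ∘ₗ φ :=
  Units.inv_eq_of_mul_eq_one_left <| by
    rw [hW.unit_spec, ← one_add_glMul_comp, glMul_glInv_self φ hV, zero_comp, add_zero]

theorem glAct_unit_eq_glMul (A₁ A₂ : V →ₗ[K] W) (h : glOne1Mem φ A₂) :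
    glAct A₁ h.1.unit h.2.unit = glMul φ (glMul φ (glInv φ A₂) A₁) A₂ := by
  rw [glMul_glMul, glMul_glInv_self φ h.2, zero_add, glAct, h.2.unit_spec,
    units_inv_eq_one_add_glInv_comp φ h.1 h.2]

end WhiteheadGroup

/-- `Δ(A) = (I+A∘φ, I+φ∘A)` together with `A^{(F,f)} = F⁻¹∘A∘f` is a crossed
module of groups. -/
theorem glDelta_crossed_module (φ : W →ₗ[K] V) :
    -- Δ lands in GL(φ)₀ (intertwining)
    (∀ A : V →ₗ[K] W,
      φ ∘ₗ ((1 : Module.End K W) + A ∘ₗ φ) = ((1 : Module.End K V) + φ ∘ₗ A) ∘ₗ φ) ∧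
    -- Δ is a group homomorphism from (GL(φ)₁, ⊙)
    (∀ A₁ A₂ : V →ₗ[K] W,
      (1 : Module.End K W) + glMul φ A₁ A₂ ∘ₗ φ =
        ((1 : Module.End K W) + A₁ ∘ₗ φ) * ((1 : Module.End K W) + A₂ ∘ₗ φ) ∧
      (1 : Module.End K V) + φ ∘ₗ glMul φ A₁ A₂ =
        ((1 : Module.End K V) + φ ∘ₗ A₁) * ((1 : Module.End K V) + φ ∘ₗ A₂)) ∧
    -- equivariance: Δ(A^{(F,f)}) = (F,f)⁻¹ · Δ(A) · (F,f)
    (∀ (A : V →ₗ[K] W) (F : (Module.End K W)ˣ) (f : (Module.End K V)ˣ),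
      φ ∘ₗ (F : Module.End K W) = (f : Module.End K V) ∘ₗ φ →
      ((1 : Module.End K W) + glAct A F f ∘ₗ φ =
        ((F⁻¹ : (Module.End K W)ˣ) : Module.End K W) *
          ((1 : Module.End K W) + A ∘ₗ φ) * (F : Module.End K W)) ∧
      ((1 : Module.End K V) + φ ∘ₗ glAct A F f =
        ((f⁻¹ : (Module.End K V)ˣ) : Module.End K V) *
          ((1 : Module.End K V) + φ ∘ₗ A) * (f : Module.End K V))) ∧
    -- Peiffer: A₁^{Δ(A₂)} = A₂⁻¹ ⊙ A₁ ⊙ A₂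
    (∀ (A₁ A₂ : V →ₗ[K] W) (h : glOne1Mem φ A₂),
      glAct A₁ h.1.unit h.2.unit = glMul φ (glMul φ (glInv φ A₂) A₁) A₂) :=
  ⟨comp_one_add_comp φ,
    fun A₁ A₂ => ⟨one_add_glMul_comp φ A₁ A₂, one_add_comp_glMul φ A₁ A₂⟩,
    fun _ _ _ hφ => ⟨one_add_glAct_comp φ hφ, one_add_comp_glAct φ hφ⟩,
    glAct_unit_eq_glMul φ⟩
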